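/- arXiv:2511.03609 — 4 statements merged into one kernel-verified Lean document; each statement's English description precedes it below -/
import Mathlib

section
/- Let P be the poset of nonempty subsets of a finite set S with |S| = n. If a chain Γ = {V₁ ⊊ … ⊊ V_{n−1}} in P of cardinality n−1 misses a cardinality k with 1 ≤ k ≤ n−1, then Γ is contained in exactly two maximal chains of P. -/
/-- `M` is a maximal chain in the poset of nonempty subsets of `S`. -/
def IsMaxChainOf (S : Type*) [DecidableEq S] [Fintype S] (M : Finset (Finset S)) : Prop :=
  (∀ A ∈ M, A.Nonempty) ∧ IsChain (· ⊆ ·) (↑M : Set (Finset S)) ∧ M.card = Fintype.card S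

/-- In the poset of nonempty subsets of an `n`-element set, a chain of cardinality `n-1`
with pairwise distinct cardinalities missing a cardinality `k` with `1 ≤ k ≤ n-1` is
contained in exactly two maximal chains. -/
theorem stmt13 {S : Type*} [DecidableEq S] [Fintype S] (n : ℕ) (hS : Fintype.card S = n)
    (Γ : Finset (Finset S)) (hne : ∀ A ∈ Γ, A.Nonempty)
    (hch : IsChain (· ⊆ ·) (↑Γ : Set (Finset S)))
    (hcard : Γ.card = n - 1) (hinj : Set.InjOn Finset.card (↑Γ : Set (Finset S)))
    (k : ℕ) (hk1 : 1 ≤ k) (hk2 : k ≤ n - 1) (hmiss : k ∉ Γ.image Finset.card) :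
    {M : Finset (Finset S) | IsMaxChainOf S M ∧ Γ ⊆ M}.ncard = 2 := by
  have hn2 : 2 ≤ n := by omega
  -- order is determined by cardinality within a chain
  have hord : ∀ A ∈ Γ, ∀ B ∈ Γ, A.card ≤ B.card → A ⊆ B := by
    intro A hA B hB hle
    rcases eq_or_ne A B with rfl | hne'
    · exact subset_rfl
    · rcases hch hA hB hne' with h | h
      · exact h
      · exact (Finset.eq_of_subset_of_card_le h hle) ▸ subset_rfl
  have hΓk : ∀ B ∈ Γ, B.card ≠ k := fun B hB h =>
    hmiss (h ▸ Finset.mem_image_of_mem _ hB)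
  -- image of card on Γ
  have hTcard : (Γ.image Finset.card).card = n - 1 := by
    rw [Finset.card_image_of_injOn hinj, hcard]
  have hTsub : Γ.image Finset.card ⊆ (Finset.Icc 1 n) \ {k} := by
    intro m hm
    simp only [Finset.mem_image] at hm
    obtain ⟨A, hA, rfl⟩ := hm
    simp only [Finset.mem_sdiff, Finset.mem_Icc, Finset.mem_singleton]
    exact ⟨⟨Finset.card_pos.2 (hne A hA), hS ▸ Finset.card_le_univ A⟩, hΓk A hA⟩
  have hTeq : Γ.image Finset.card = (Finset.Icc 1 n) \ {k} := by
    apply Finset.eq_of_subset_of_card_le hTsub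
    rw [Finset.card_sdiff_of_subset (by simp [Finset.singleton_subset_iff, Finset.mem_Icc]; omega)]
    simp only [Nat.card_Icc, Finset.card_singleton, hTcard]
    omega
  -- get W of card k+1
  obtain ⟨W, hWΓ, hWcard⟩ : ∃ W ∈ Γ, W.card = k + 1 := by
    have : k + 1 ∈ Γ.image Finset.card := by
      rw [hTeq]; simp only [Finset.mem_sdiff, Finset.mem_Icc, Finset.mem_singleton]; omega
    simpa [Finset.mem_image] using this
  -- get V of card k-1 (or ∅ if k = 1)
  obtain ⟨V, hVmem, hVcard, hVmax⟩ :
      ∃ V : Finset S, (V ∈ Γ ∨ V = ∅) ∧ V.card = k - 1 ∧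
        ∀ B ∈ Γ, B.card < k → B ⊆ V := by
    rcases eq_or_lt_of_le hk1 with h1 | h2
    · refine ⟨∅, Or.inr rfl, by simp; omega, fun B hB hBk => ?_⟩
      have := Finset.card_pos.2 (hne B hB)
      omega
    · have : k - 1 ∈ Γ.image Finset.card := by
        rw [hTeq]; simp only [Finset.mem_sdiff, Finset.mem_Icc, Finset.mem_singleton]; omega
      simp only [Finset.mem_image] at this
      obtain ⟨V, hV, hVc⟩ := this
      exact ⟨V, Or.inl hV, hVc, fun B hB hBk => hord B hB V hV (by omega)⟩
  have hVW : V ⊆ W := by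
    rcases hVmem with h | rfl
    · exact hord V h W hWΓ (by omega)
    · exact Finset.empty_subset W
  have hWmin : ∀ B ∈ Γ, k < B.card → W ⊆ B := fun B hB hBk => hord W hWΓ B hB (by omega)
  -- W \ V has two elements
  have hWV : (W \ V).card = 2 := by
    rw [Finset.card_sdiff_of_subset hVW, hWcard, hVcard]; omega
  obtain ⟨x, y, hxy, hWVeq⟩ := Finset.card_eq_two.1 hWV
  have hxWV : x ∈ W \ V := by rw [hWVeq]; simp
  have hyWV : y ∈ W \ V := by rw [hWVeq]; simp
  obtain ⟨hxW, hxV⟩ := Finset.mem_sdiff.1 hxWV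
  obtain ⟨hyW, hyV⟩ := Finset.mem_sdiff.1 hyWV
  have hc1 : (insert x V).card = k := by
    rw [Finset.card_insert_of_notMem hxV, hVcard]; omega
  have hc2 : (insert y V).card = k := by
    rw [Finset.card_insert_of_notMem hyV, hVcard]; omega
  have hsub1 : insert x V ⊆ W := Finset.insert_subset hxW hVW
  have hsub2 : insert y V ⊆ W := Finset.insert_subset hyW hVW
  -- forward: every admissible A gives a maximal chain
  have hmem : ∀ A : Finset S, V ⊆ A → A ⊆ W → A.card = k →
      IsMaxChainOf S (insert A Γ) ∧ Γ ⊆ insert A Γ := by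
    intro A hVA hAW hAc
    have hAΓ : A ∉ Γ := fun h => hΓk A h hAc
    refine ⟨⟨?_, ?_, ?_⟩, Finset.subset_insert _ _⟩
    · intro B hB
      rcases Finset.mem_insert.1 hB with rfl | hB
      · exact Finset.card_pos.1 (by omega)
      · exact hne B hB
    · rw [Finset.coe_insert]
      refine hch.insert ?_
      intro B hB hAB
      have hBΓ : B ∈ Γ := hB
      rcases lt_or_gt_of_ne (hΓk B hBΓ) with h | h
      · exact Or.inr ((hVmax B hBΓ h).trans hVA)
      · exact Or.inl (hAW.trans (hWmin B hBΓ h))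
    · rw [Finset.card_insert_of_notMem hAΓ, hcard, hS]; omega
  -- backward: every maximal chain containing Γ has this form
  have hrev : ∀ M : Finset (Finset S), IsMaxChainOf S M → Γ ⊆ M →
      ∃ A, V ⊆ A ∧ A ⊆ W ∧ A.card = k ∧ M = insert A Γ := by
    rintro M ⟨hMne, hMch, hMcard⟩ hΓM
    have hMinj : Set.InjOn Finset.card (↑M : Set (Finset S)) := by
      intro A hA B hB hAB
      rcases eq_or_ne A B with h | h
      · exact h
      rcases hMch hA hB h with hsub | hsub
      · exact Finset.eq_of_subset_of_card_le hsub (le_of_eq hAB.symm)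
      · exact (Finset.eq_of_subset_of_card_le hsub (le_of_eq hAB)).symm
    have hMT : M.image Finset.card = Finset.Icc 1 n := by
      apply Finset.eq_of_subset_of_card_le
      · intro m hm
        simp only [Finset.mem_image] at hm
        obtain ⟨A, hA, rfl⟩ := hm
        simp only [Finset.mem_Icc]
        exact ⟨Finset.card_pos.2 (hMne A hA), hS ▸ Finset.card_le_univ A⟩
      · rw [Finset.card_image_of_injOn hMinj, hMcard, hS]
        simp [Nat.card_Icc]
    obtain ⟨A, hAM, hAc⟩ : ∃ A ∈ M, A.card = k := by
      have : k ∈ M.image Finset.card := by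
        rw [hMT]; simp only [Finset.mem_Icc]; omega
      simpa [Finset.mem_image] using this
    have hAΓ : A ∉ Γ := fun h => hΓk A h hAc
    have hMeq : M = insert A Γ := by
      refine (Finset.eq_of_subset_of_card_le (Finset.insert_subset hAM hΓM) ?_).symm
      rw [Finset.card_insert_of_notMem hAΓ, hcard, hMcard, hS]; omega
    have hAW : A ⊆ W := by
      rcases hMch (Finset.mem_coe.2 hAM) (Finset.mem_coe.2 (hΓM hWΓ))
          (fun h => by rw [h, hWcard] at hAc; omega) with h | h
      · exact h
      · have := Finset.card_le_card h
        omega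
    have hVA : V ⊆ A := by
      rcases hVmem with hv | rfl
      · rcases hMch (Finset.mem_coe.2 (hΓM hv)) (Finset.mem_coe.2 hAM)
            (fun h => by rw [← h, hVcard] at hAc; omega) with h | h
        · exact h
        · have := Finset.card_le_card h
          omega
      · exact Finset.empty_subset A
    exact ⟨A, hVA, hAW, hAc, hMeq⟩
  -- characterize admissible A
  have hchar : ∀ A : Finset S, V ⊆ A → A ⊆ W → A.card = k →
      A = insert x V ∨ A = insert y V := by
    intro A hVA hAW hAc
    have h1 : (A \ V).card = 1 := by
      rw [Finset.card_sdiff_of_subset hVA, hAc, hVcard]; omega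
    obtain ⟨z, hz⟩ := Finset.card_eq_one.1 h1
    have hzAV : z ∈ A \ V := hz ▸ Finset.mem_singleton_self z
    obtain ⟨hzA, hzV⟩ := Finset.mem_sdiff.1 hzAV
    have hzWV : z ∈ W \ V := Finset.mem_sdiff.2 ⟨hAW hzA, hzV⟩
    have hAeq : A = insert z V := by
      ext a
      simp only [Finset.mem_insert]
      constructor
      · intro ha
        by_cases hav : a ∈ V
        · exact Or.inr hav
        · have : a ∈ A \ V := Finset.mem_sdiff.2 ⟨ha, hav⟩
          rw [hz] at this
          exact Or.inl (Finset.mem_singleton.1 this)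
      · rintro (rfl | ha)
        · exact hzA
        · exact hVA ha
    rw [hWVeq] at hzWV
    rcases Finset.mem_insert.1 hzWV with rfl | h
    · exact Or.inl hAeq
    · rw [Finset.mem_singleton] at h
      subst h
      exact Or.inr hAeq
  -- the set of maximal chains containing Γ
  have hSeteq : {M : Finset (Finset S) | IsMaxChainOf S M ∧ Γ ⊆ M}
      = {insert (insert x V) Γ, insert (insert y V) Γ} := by
    ext M
    simp only [Set.mem_setOf_eq, Set.mem_insert_iff, Set.mem_singleton_iff]
    constructor
    · rintro ⟨hM, hΓM⟩
      obtain ⟨A, hVA, hAW, hAc, rfl⟩ := hrev M hM hΓM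
      rcases hchar A hVA hAW hAc with rfl | rfl
      · exact Or.inl rfl
      · exact Or.inr rfl
    · rintro (rfl | rfl)
      · exact hmem _ (Finset.subset_insert _ _) hsub1 hc1
      · exact hmem _ (Finset.subset_insert _ _) hsub2 hc2
  rw [hSeteq]
  have hne12 : insert (insert x V) Γ ≠ insert (insert y V) Γ := by
    intro h
    have h1 : insert x V ∈ insert (insert y V) Γ := h ▸ Finset.mem_insert_self _ _
    rcases Finset.mem_insert.1 h1 with h2 | h2
    · have : x ∈ insert y V := h2 ▸ Finset.mem_insert_self x V
      rcases Finset.mem_insert.1 this with h3 | h3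
      · exact hxy h3
      · exact hxV h3
    · exact hΓk _ h2 hc1
  rw [Set.ncard_pair hne12]
end

section
/- Let X be the inverse limit of a sequence of finite T0 Alexandrov spaces with monotone bonding maps, and let L be the direct limit (colimit in distributive lattices) of the corresponding up-set lattices U(Πⁿ) along the inverse-image maps. Then L is isomorphic to the lattice of compact-open subsets of X; equivalently, every compact-open subset of X is of the form pₙ⁻¹(U) for some n and some up-set U of Πⁿ. -/
abbrev InvLim (X : ℕ → Type*) (ρ : ∀ n, X (n + 1) → X n) : Type _ :=
  {x : ∀ n, X n // ∀ n, ρ n (x (n + 1)) = x n}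

/-- The Alexandrov topology on a preorder: open sets are the up-sets. -/
def alex (P : Type*) [Preorder P] : TopologicalSpace P where
  IsOpen U := IsUpperSet U
  isOpen_univ := isUpperSet_univ
  isOpen_inter := fun _ _ hU hV => hU.inter hV
  isOpen_sUnion := fun _ h => isUpperSet_sUnion h

section aux
variable {X : ℕ → Type*}

/-- lift a cylinder from level n to any level N ≥ n -/
lemma lift_cyl [∀ n, PartialOrder (X n)] (ρ : ∀ n, X (n + 1) → X n)
    (hmono : ∀ n, Monotone (ρ n)) {n N : ℕ} (h : n ≤ N) (U : Set (X n)) (hU : IsUpperSet U) :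
    ∃ V : Set (X N), IsUpperSet V ∧
      ((fun x : InvLim X ρ => x.1 n) ⁻¹' U) =
      (fun x : InvLim X ρ => x.1 N) ⁻¹' V := by
  induction N, h using Nat.le_induction with
  | base => exact ⟨U, hU, rfl⟩
  | succ N hnN ih =>
    obtain ⟨V, hV, hEq⟩ := ih
    refine ⟨ρ N ⁻¹' V, hV.preimage (hmono N), ?_⟩
    rw [hEq]
    ext x
    simp only [Set.mem_preimage]
    rw [x.2 N]

/-- compactness in the discrete world -/
lemma compact_bot [∀ n, Fintype (X n)] [T : ∀ n, TopologicalSpace (X n)]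
    [∀ n, DiscreteTopology (X n)] (ρ : ∀ n, X (n + 1) → X n) (n : ℕ) (U : Set (X n)) :
    IsCompact {f : ∀ m, X m | (∀ m, ρ m (f (m + 1)) = f m) ∧ f n ∈ U} := by
  haveI : ∀ m, Finite (X m) := fun _ => inferInstance
  have h1 : IsClosed {f : ∀ m, X m | ∀ m, ρ m (f (m + 1)) = f m} := by
    have : {f : ∀ m, X m | ∀ m, ρ m (f (m + 1)) = f m} =
        ⋂ m, {f : ∀ m, X m | ρ m (f (m + 1)) = f m} := by ext f; simp
    rw [this]
    refine isClosed_iInter fun m => ?_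
    exact IsClosed.preimage
      (Continuous.prodMk (continuous_apply (m + 1)) (continuous_apply m))
      (isClosed_discrete {p : X (m + 1) × X m | ρ m p.1 = p.2})
  have h2 : IsClosed {f : ∀ m, X m | f n ∈ U} :=
    IsClosed.preimage (continuous_apply n) (isClosed_discrete U)
  exact (h1.inter h2).isCompact

end aux

/-- The direct limit of the up-set lattices along inverse-image maps is the compact-open
lattice of the inverse limit space: a subset `K` of the inverse limit of finite T0
Alexandrov spaces (with monotone bonding maps) is compact-open iff it is of the form
`pₙ⁻¹(U)` for some `n` and some up-set `U` of `Xₙ`. -/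
theorem stmt16 (X : ℕ → Type*) [∀ n, PartialOrder (X n)] [∀ n, Fintype (X n)]
    (ρ : ∀ n, X (n + 1) → X n) (hmono : ∀ n, Monotone (ρ n)) :
    letI : ∀ n, TopologicalSpace (X n) := fun n => alex (X n)
    ∀ K : Set {x : ∀ n, X n // ∀ n, ρ n (x (n + 1)) = x n},
      (IsCompact K ∧ IsOpen K) ↔
        ∃ (n : ℕ) (U : Set (X n)), IsUpperSet U ∧
          K = (fun x : {x : ∀ n, X n // ∀ n, ρ n (x (n + 1)) = x n} => x.1 n) ⁻¹' U := by
  letI : ∀ n, TopologicalSpace (X n) := fun n => alex (X n)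
  intro K
  have hpcont : ∀ m, Continuous (fun x : InvLim X ρ => x.1 m) :=
    fun m => (continuous_apply m).comp continuous_subtype_val
  constructor
  · rintro ⟨hKc, hKo⟩
    -- basis: every point of an open set has a cylinder neighborhood inside it
    have hbasis : ∀ x : InvLim X ρ, x ∈ K → ∃ (m : ℕ) (V : Set (X m)), IsUpperSet V ∧
        x ∈ (fun y : InvLim X ρ => y.1 m) ⁻¹' V ∧ (fun y : InvLim X ρ => y.1 m) ⁻¹' V ⊆ K := by
      intro x hx
      obtain ⟨O, hO, hOK⟩ := isOpen_induced_iff.mp hKo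
      rw [← hOK] at hx
      obtain ⟨I, u, hu, hsub⟩ := isOpen_pi_iff.mp hO x.1 hx
      set N := I.sup id with hN
      have hle : ∀ i ∈ I, i ≤ N := fun i hi => Finset.le_sup (f := id) hi
      have hch : ∀ i : I, ∃ V : Set (X N), IsUpperSet V ∧
          ((fun y : InvLim X ρ => y.1 (i : ℕ)) ⁻¹' u i) = (fun y : InvLim X ρ => y.1 N) ⁻¹' V :=
        fun i => lift_cyl ρ hmono (hle i i.2) (u i) ((hu i i.2).1)
      choose V hVup hVeq using hch
      refine ⟨N, ⋂ i : I, V i, isUpperSet_iInter fun i => hVup i, ?_, ?_⟩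
      · simp only [Set.mem_preimage, Set.mem_iInter]
        intro i
        have : x ∈ (fun y : InvLim X ρ => y.1 (i : ℕ)) ⁻¹' u i := (hu i i.2).2
        rwa [hVeq i] at this
      · intro y hy
        rw [← hOK]
        apply hsub
        intro i hi
        have hy' : y ∈ (fun z : InvLim X ρ => z.1 N) ⁻¹' V ⟨i, hi⟩ := by
          simp only [Set.mem_preimage, Set.mem_iInter] at hy ⊢
          exact hy ⟨i, hi⟩
        rw [← hVeq ⟨i, hi⟩] at hy'
        exact hy'
    choose! m V hVup hVmem hVsub using hbasis
    have hcover : K ⊆ ⋃ x : K, (fun y : InvLim X ρ => y.1 (m x)) ⁻¹' V x := by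
      intro y hy
      exact Set.mem_iUnion.mpr ⟨⟨y, hy⟩, hVmem y hy⟩
    obtain ⟨t, ht⟩ := hKc.elim_finite_subcover
      (fun x : K => (fun y : InvLim X ρ => y.1 (m x.1)) ⁻¹' V x.1)
      (fun x => (hpcont (m x.1)).isOpen_preimage _ (hVup x.1 x.2)) hcover
    set N := t.sup (fun x : K => m x.1) with hN
    have hle : ∀ x ∈ t, m (x : K).1 ≤ N := fun x hx => Finset.le_sup (f := fun y : ↑K => m y.1) hx
    choose W hWup hWeq using fun (x : K) (hx : x ∈ t) =>
      lift_cyl ρ hmono (hle x hx) (V x.1) (hVup x.1 x.2)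
    refine ⟨N, ⋃ (x : K) (hx : x ∈ t), W x hx,
      isUpperSet_iUnion fun x => isUpperSet_iUnion fun hx => hWup x hx, ?_⟩
    ext y
    simp only [Set.preimage_iUnion, Set.mem_iUnion]
    constructor
    · intro hy
      obtain ⟨x, hmem⟩ := Set.mem_iUnion.mp (ht hy)
      obtain ⟨hx, hyx⟩ := Set.mem_iUnion.mp hmem
      exact ⟨x, hx, (hWeq x hx) ▸ hyx⟩
    · rintro ⟨x, hx, hy⟩
      rw [← hWeq x hx] at hy
      exact hVsub x.1 x.2 hy
  · rintro ⟨n, U, hU, rfl⟩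
    constructor
    · -- compactness via discrete topology
      have hemb : Topology.IsEmbedding (Subtype.val : InvLim X ρ → ∀ m, X m) := Topology.IsEmbedding.subtypeVal
      rw [hemb.isCompact_iff]
      have himg : Subtype.val '' ((fun x : InvLim X ρ => x.1 n) ⁻¹' U) =
          {f : ∀ m, X m | (∀ m, ρ m (f (m + 1)) = f m) ∧ f n ∈ U} := by
        ext f
        constructor
        · rintro ⟨x, hx, rfl⟩; exact ⟨x.2, hx⟩
        · rintro ⟨hf, hfn⟩; exact ⟨⟨f, hf⟩, hfn, rfl⟩
      rw [himg]
      have hbot := @compact_bot X _ (fun _ => ⊥) (fun m => @DiscreteTopology.mk (X m) ⊥ rfl) ρ n U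
      have hle : (@Pi.topologicalSpace ℕ X (fun _ => ⊥)) ≤
          (@Pi.topologicalSpace ℕ X (fun n => alex (X n))) :=
        iInf_mono fun i => induced_mono bot_le
      have hcont : @Continuous (∀ m, X m) (∀ m, X m)
          (@Pi.topologicalSpace ℕ X (fun _ => ⊥))
          (@Pi.topologicalSpace ℕ X (fun n => alex (X n))) id :=
        continuous_id_of_le hle
      have himage := @IsCompact.image (∀ m, X m) (∀ m, X m)
        (@Pi.topologicalSpace ℕ X (fun _ => ⊥))
        (@Pi.topologicalSpace ℕ X (fun n => alex (X n))) _ id hbot hcont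
      rwa [Set.image_id] at himage
    · exact (hpcont n).isOpen_preimage U hU
end

section
/- Let Ch denote barycentric subdivision of finite simplicial complexes and let I be the standard 1-simplex (face poset of a 2-element set). In the inverse limit Ch^∞(I) of iterated barycentric subdivisions with bonding maps sending a chain to its maximum, the maximal points under the specialization order are in bijection with the points of the real interval [0,1]: each x ∈ [0,1] corresponds to the sequence (σₙˣ) where σₙˣ is the unique face of minimal dimension of the n-th barycentric subdivision whose geometric realization contains x. -/
/-- Faces of the `n`-th dyadic (barycentric) subdivision of `[0,1]`:
`inl e` is the edge `[e/2ⁿ, (e+1)/2ⁿ]`, `inr v` is the vertex `v/2ⁿ`. -/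
def Face (n : ℕ) : Type := Fin (2 ^ n) ⊕ Fin (2 ^ n + 1)

/-- The geometric realization of a face of the `n`-th dyadic subdivision of `[0,1]`. -/
noncomputable def realF (n : ℕ) : Face n → Set ℝ
  | .inl e => Set.Icc ((e.1 : ℝ) / 2 ^ n) ((e.1 + 1 : ℝ) / 2 ^ n)
  | .inr v => {(v.1 : ℝ) / 2 ^ n}

/-- The inverse limit `Ch^∞(I)` of the iterated barycentric subdivisions of the standard
1-simplex: sequences of faces where `σₙ` is the smallest face of the `n`-th subdivision
containing the realization of `σₙ₊₁`. -/
def CLim : Type :=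
  {σ : (n : ℕ) → Face n //
    ∀ n, realF (n + 1) (σ (n + 1)) ⊆ realF n (σ n) ∧
      ∀ f : Face n, realF (n + 1) (σ (n + 1)) ⊆ realF n f → realF n (σ n) ⊆ realF n f}

/-- The specialization order on `Ch^∞(I)`: `σ ⪯ τ` iff `σₙ ≥ τₙ` for all `n` (the face order
being inclusion of realizations). -/
def SpecLe (σ τ : CLim) : Prop := ∀ n, realF n (τ.1 n) ⊆ realF n (σ.1 n)

/-- `σ` is a maximal point of `Ch^∞(I)` for the specialization order. -/
def IsMaxPt (σ : CLim) : Prop := ∀ τ : CLim, SpecLe σ τ → τ = σ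

/-!
Every face of the `n`-th subdivision is a dyadic interval `[a/2ⁿ, b/2ⁿ]` with `b ∈ {a, a + 1}`,
so the smallest face containing `x` is `[⌊2ⁿx⌋/2ⁿ, ⌈2ⁿx⌉/2ⁿ]`, and these intervals are nested
in `n`. A point of the inverse limit is a nested sequence of nonempty compact intervals of length
at most `2⁻ⁿ`, so it determines a unique `x ∈ [0,1]` in their intersection, and it lies below
`(σₙˣ)` in the specialization order. Hence the maximal points are exactly the sequences `(σₙˣ)`,
and `x` is recovered from `(σₙˣ)` as the unique point of the intersection.
-/

open Set

lemma mem_Icc_div_two_pow {n : ℕ} {a b x : ℝ} :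
    x ∈ Icc (a / 2 ^ n) (b / 2 ^ n) ↔ a ≤ x * 2 ^ n ∧ x * 2 ^ n ≤ b := by
  rw [mem_Icc, div_le_iff₀ (by positivity), le_div_iff₀ (by positivity)]

lemma Icc_div_two_pow_subset {n : ℕ} {a b c d : ℕ} (hca : c ≤ a) (hbd : b ≤ d) :
    Icc ((a : ℝ) / 2 ^ n) (b / 2 ^ n) ⊆ Icc ((c : ℝ) / 2 ^ n) (d / 2 ^ n) :=
  Icc_subset_Icc (by gcongr) (by gcongr)

namespace Face

variable {n : ℕ}

def vertex (v : Fin (2 ^ n + 1)) : Face n := Sum.inr v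

def edge (e : Fin (2 ^ n)) : Face n := Sum.inl e

def lo : Face n → ℕ
  | .inl e => e
  | .inr v => v

def hi : Face n → ℕ
  | .inl e => e + 1
  | .inr v => v

lemma lo_le_hi : ∀ f : Face n, f.lo ≤ f.hi
  | .inl _ => Nat.le_succ _
  | .inr _ => le_rfl

lemma hi_le_lo_add_one : ∀ f : Face n, f.hi ≤ f.lo + 1
  | .inl _ => le_rfl
  | .inr _ => Nat.le_succ _

lemma hi_le_two_pow : ∀ f : Face n, f.hi ≤ 2 ^ n
  | .inl e => e.2
  | .inr v => Nat.lt_succ_iff.1 v.2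

lemma eq_of_lo_eq_of_hi_eq : ∀ {f g : Face n}, f.lo = g.lo → f.hi = g.hi → f = g
  | .inl _, .inl _, h, _ => congrArg Sum.inl (Fin.ext h)
  | .inr _, .inr _, h, _ => congrArg Sum.inr (Fin.ext h)
  | .inl _, .inr _, hlo, hhi => by simp only [lo, hi] at hlo hhi; omega
  | .inr _, .inl _, hlo, hhi => by simp only [lo, hi] at hlo hhi; omega

end Face

lemma realF_eq_Icc {n : ℕ} : ∀ f : Face n, realF n f = Icc (f.lo / 2 ^ n : ℝ) (f.hi / 2 ^ n)
  | .inl e => by simp [realF, Face.lo, Face.hi]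
  | .inr v => (Icc_self _).symm

lemma realF_injective (n : ℕ) : Function.Injective (realF n) := by
  intro f g h
  rw [realF_eq_Icc, realF_eq_Icc] at h
  have hle : ∀ f : Face n, (f.lo / 2 ^ n : ℝ) ≤ f.hi / 2 ^ n := fun f => by
    gcongr; exact f.lo_le_hi
  obtain ⟨hlo, hhi⟩ := (Icc_eq_Icc_iff (hle f)).1 h
  have h2 : (2 : ℝ) ^ n ≠ 0 := by positivity
  exact Face.eq_of_lo_eq_of_hi_eq (by exact_mod_cast (div_left_inj' h2).1 hlo)
    (by exact_mod_cast (div_left_inj' h2).1 hhi)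

lemma realF_nonempty (n : ℕ) (f : Face n) : (realF n f).Nonempty := by
  rw [realF_eq_Icc]
  exact nonempty_Icc.2 (by gcongr; exact f.lo_le_hi)

lemma isCompact_realF (n : ℕ) (f : Face n) : IsCompact (realF n f) := by
  rw [realF_eq_Icc]; exact isCompact_Icc

lemma realF_subset_Icc (n : ℕ) (f : Face n) : realF n f ⊆ Icc 0 1 := by
  rw [realF_eq_Icc]
  refine Icc_subset_Icc (by positivity) ((div_le_one (by positivity)).2 ?_)
  exact_mod_cast f.hi_le_two_pow

lemma abs_sub_le_of_mem_realF {n : ℕ} {f : Face n} {x y : ℝ} (hx : x ∈ realF n f)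
    (hy : y ∈ realF n f) : |x - y| ≤ 1 / 2 ^ n := by
  rw [realF_eq_Icc] at hx hy
  have hwidth : (f.hi : ℝ) ≤ f.lo + 1 := by exact_mod_cast f.hi_le_lo_add_one
  have hwidth' : (f.hi / 2 ^ n : ℝ) ≤ f.lo / 2 ^ n + 1 / 2 ^ n := by
    rw [← add_div]; gcongr
  rw [abs_sub_le_iff]
  constructor <;> linarith [hx.1, hx.2, hy.1, hy.2]

lemma eq_of_forall_mem_realF {f : ∀ n, Face n} {x y : ℝ} (hx : ∀ n, x ∈ realF n (f n))
    (hy : ∀ n, y ∈ realF n (f n)) : x = y := by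
  by_contra hne
  obtain ⟨n, hn⟩ := exists_pow_lt_of_lt_one (abs_pos.2 (sub_ne_zero.2 hne))
    (by norm_num : (1 / 2 : ℝ) < 1)
  rw [div_pow, one_pow] at hn
  exact (abs_sub_le_of_mem_realF (hx n) (hy n)).not_gt hn

section MinFace

variable (n : ℕ) (x : Icc (0 : ℝ) 1)

lemma coe_mul_two_pow_nonneg : 0 ≤ (x : ℝ) * 2 ^ n := mul_nonneg x.2.1 (by positivity)

lemma coe_mul_two_pow_le : (x : ℝ) * 2 ^ n ≤ 2 ^ n :=
  mul_le_of_le_one_left (by positivity) x.2.2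

/-- The face `σₙˣ`. -/
noncomputable def minFace : Face n :=
  if h : ⌈(x : ℝ) * 2 ^ n⌉₊ = ⌊(x : ℝ) * 2 ^ n⌋₊ then
    Face.vertex ⟨⌊(x : ℝ) * 2 ^ n⌋₊,
      Nat.lt_succ_of_le (Nat.floor_le_of_le (by exact_mod_cast coe_mul_two_pow_le n x))⟩
  else
    Face.edge ⟨⌊(x : ℝ) * 2 ^ n⌋₊, by
      have : ⌈(x : ℝ) * 2 ^ n⌉₊ ≤ 2 ^ n :=
        Nat.ceil_le.2 (by exact_mod_cast coe_mul_two_pow_le n x)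
      have := Nat.floor_le_ceil ((x : ℝ) * 2 ^ n)
      omega⟩

lemma lo_minFace : (minFace n x).lo = ⌊(x : ℝ) * 2 ^ n⌋₊ := by
  unfold minFace
  split_ifs <;> rfl

lemma hi_minFace : (minFace n x).hi = ⌈(x : ℝ) * 2 ^ n⌉₊ := by
  unfold minFace
  split_ifs with h
  · exact h.symm
  · have := Nat.ceil_le_floor_add_one ((x : ℝ) * 2 ^ n)
    have := Nat.floor_le_ceil ((x : ℝ) * 2 ^ n)
    show ⌊(x : ℝ) * 2 ^ n⌋₊ + 1 = _
    omega

lemma realF_minFace :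
    realF n (minFace n x) = Icc (⌊(x : ℝ) * 2 ^ n⌋₊ / 2 ^ n : ℝ) (⌈(x : ℝ) * 2 ^ n⌉₊ / 2 ^ n) := by
  rw [realF_eq_Icc, lo_minFace, hi_minFace]

lemma mem_realF_minFace : (x : ℝ) ∈ realF n (minFace n x) := by
  rw [realF_minFace, mem_Icc_div_two_pow]
  exact ⟨Nat.floor_le (coe_mul_two_pow_nonneg n x), Nat.le_ceil _⟩

variable {n x}

lemma realF_minFace_subset {f : Face n} (hf : (x : ℝ) ∈ realF n f) :
    realF n (minFace n x) ⊆ realF n f := by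
  rw [realF_eq_Icc, mem_Icc_div_two_pow] at hf
  rw [realF_minFace, realF_eq_Icc]
  exact Icc_div_two_pow_subset (Nat.le_floor hf.1) (Nat.ceil_le.2 hf.2)

variable (n x)

/-- The realizations of `σₙˣ` are nested because `2⌊y⌋ ≤ ⌊2y⌋` and `⌈2y⌉ ≤ 2⌈y⌉`. -/
lemma realF_minFace_succ_subset :
    realF (n + 1) (minFace (n + 1) x) ⊆ realF n (minFace n x) := by
  have hscale : (x : ℝ) * 2 ^ (n + 1) = 2 * ((x : ℝ) * 2 ^ n) := by ring
  have hdouble : ∀ a : ℕ, (a : ℝ) / 2 ^ n = ((2 * a : ℕ) : ℝ) / 2 ^ (n + 1) := fun a => by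
    push_cast; rw [pow_succ]; field_simp
  rw [realF_minFace, realF_minFace, hdouble, hdouble (⌈_⌉₊)]
  refine Icc_div_two_pow_subset (Nat.le_floor ?_) (Nat.ceil_le.2 ?_)
  · rw [hscale]; push_cast
    exact mul_le_mul_of_nonneg_left (Nat.floor_le (coe_mul_two_pow_nonneg n x)) zero_le_two
  · rw [hscale]; push_cast
    exact mul_le_mul_of_nonneg_left (Nat.le_ceil _) zero_le_two

end MinFace

namespace CLim

noncomputable def ofPoint (x : Icc (0 : ℝ) 1) : CLim :=
  ⟨fun n => minFace n x, fun n =>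
    ⟨realF_minFace_succ_subset n x,
      fun _ hf => realF_minFace_subset (hf (mem_realF_minFace (n + 1) x))⟩⟩

lemma specLe_antisymm {σ τ : CLim} (hστ : SpecLe σ τ) (hτσ : SpecLe τ σ) : σ = τ :=
  Subtype.ext <| funext fun n => realF_injective n ((hτσ n).antisymm (hστ n))

lemma exists_forall_mem_realF (σ : CLim) :
    ∃ x : Icc (0 : ℝ) 1, ∀ n, (x : ℝ) ∈ realF n (σ.1 n) := by
  obtain ⟨x, hx⟩ := IsCompact.nonempty_iInter_of_sequence_nonempty_isCompact_isClosed
    (fun n => realF n (σ.1 n)) (fun n => (σ.2 n).1) (fun n => realF_nonempty n _)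
    (isCompact_realF 0 _) (fun n => (isCompact_realF n _).isClosed)
  have hx : ∀ n, x ∈ realF n (σ.1 n) := mem_iInter.1 hx
  exact ⟨⟨x, realF_subset_Icc 0 _ (hx 0)⟩, hx⟩

lemma specLe_ofPoint {σ : CLim} {x : Icc (0 : ℝ) 1} (hx : ∀ n, (x : ℝ) ∈ realF n (σ.1 n)) :
    SpecLe σ (ofPoint x) :=
  fun n => realF_minFace_subset (hx n)

lemma isMaxPt_ofPoint (x : Icc (0 : ℝ) 1) : IsMaxPt (ofPoint x) := by
  intro τ hτ
  obtain ⟨y, hy⟩ := exists_forall_mem_realF τ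
  have hyx : (y : ℝ) = x :=
    eq_of_forall_mem_realF (fun n => hτ n (hy n)) (mem_realF_minFace · x)
  refine specLe_antisymm ?_ hτ
  exact specLe_ofPoint fun n => hyx ▸ hy n

lemma ofPoint_injective : Function.Injective ofPoint := by
  intro x y hxy
  have hy : ∀ n, (y : ℝ) ∈ realF n (minFace n x) := fun n => by
    rw [show minFace n x = minFace n y from congrFun (congrArg Subtype.val hxy) n]
    exact mem_realF_minFace n y
  exact Subtype.ext (eq_of_forall_mem_realF (mem_realF_minFace · x) hy)

lemma exists_ofPoint_eq_of_isMaxPt {σ : CLim} (hσ : IsMaxPt σ) : ∃ x, ofPoint x = σ := by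
  obtain ⟨x, hx⟩ := exists_forall_mem_realF σ
  exact ⟨x, hσ _ (specLe_ofPoint hx)⟩

end CLim

/-- The maximal points of `Ch^∞(I)` under the specialization order are in bijection with
the real interval `[0,1]`: each `x ∈ [0,1]` corresponds to the sequence `(σₙˣ)` where
`σₙˣ` is the unique face of minimal dimension of the `n`-th barycentric subdivision whose
realization contains `x`. -/
theorem stmt17 :
    ∃ e : Set.Icc (0 : ℝ) 1 ≃ {σ : CLim // IsMaxPt σ},
      ∀ (x : Set.Icc (0 : ℝ) 1) (n : ℕ),
        (x : ℝ) ∈ realF n ((e x).1.1 n) ∧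
        ∀ f : Face n, (x : ℝ) ∈ realF n f → realF n ((e x).1.1 n) ⊆ realF n f := by
  let toMaxPt (x : Set.Icc (0 : ℝ) 1) : {σ : CLim // IsMaxPt σ} :=
    ⟨CLim.ofPoint x, CLim.isMaxPt_ofPoint x⟩
  have hbij : Function.Bijective toMaxPt :=
    ⟨fun _ _ h => CLim.ofPoint_injective (congrArg Subtype.val h), fun ⟨_, hσ⟩ =>
      (CLim.exists_ofPoint_eq_of_isMaxPt hσ).imp fun _ h => Subtype.ext h⟩
  exact ⟨Equiv.ofBijective toMaxPt hbij, fun x n =>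
    ⟨mem_realF_minFace n x, fun _ => realF_minFace_subset⟩⟩
end

section
/- In the inverse limit of iterated barycentric subdivisions of the standard 1-simplex [0,1] (with bonding maps as above), let x ∈ (0,1). If x is a dyadic rational k/2ᴺ (0 < k < 2ᴺ), then the down-set of the maximal point corresponding to x in the specialization order has exactly 3 elements; if x is not a dyadic rational, the down-set is a singleton. -/
open Set

theorem Nat.ceil_two_mul_sub_one_div_two {α : Type*} [CommRing α] [LinearOrder α]
    [IsStrictOrderedRing α] [FloorSemiring α] (a : α) :
    (⌈2 * a⌉₊ - 1) / 2 = ⌈a⌉₊ - 1 := by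
  rcases Nat.eq_zero_or_pos ⌈a⌉₊ with h | h
  · have ha : 2 * a ≤ 0 := by linarith [Nat.ceil_eq_zero.1 h]
    simp [h, Nat.ceil_eq_zero.2 ha]
  · have hle : ⌈2 * a⌉₊ ≤ 2 * ⌈a⌉₊ := Nat.ceil_le.2 (by push_cast; linarith [Nat.le_ceil a])
    have hlt : 2 * (⌈a⌉₊ - 1) < ⌈2 * a⌉₊ := by
      have := Nat.lt_ceil.1 (Nat.sub_one_lt h.ne')
      exact Nat.lt_ceil.2 (by push_cast at this ⊢; linarith)
    omega

lemma mem_realF_inl {n : ℕ} {e : Fin (2 ^ n)} {x : ℝ} :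
    x ∈ realF n (.inl e) ↔ (e : ℝ) ≤ x * 2 ^ n ∧ x * 2 ^ n ≤ e + 1 := by
  simp [realF, div_le_iff₀, le_div_iff₀]

lemma mem_realF_inr {n : ℕ} {v : Fin (2 ^ n + 1)} {x : ℝ} :
    x ∈ realF n (.inr v) ↔ x * 2 ^ n = v := by
  simp [realF, eq_div_iff]

lemma exists_eq_inl_of_realF_inl_subset {m n : ℕ} {e : Fin (2 ^ m)} {f : Face n}
    (h : realF m (.inl e) ⊆ realF n f) :
    ∃ e' : Fin (2 ^ n), f = .inl e' ∧
      (e' : ℝ) / 2 ^ n ≤ e / 2 ^ m ∧ ((e : ℝ) + 1) / 2 ^ m ≤ (e' + 1) / 2 ^ n := by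
  have hlt : (e : ℝ) / 2 ^ m < (e + 1) / 2 ^ m := by gcongr; linarith
  cases f with
  | inl e' => exact ⟨e', rfl, (Icc_subset_Icc_iff hlt.le).1 h⟩
  | inr v =>
    have hl := h (left_mem_Icc.2 hlt.le)
    have hr := h (right_mem_Icc.2 hlt.le)
    simp only [realF, mem_singleton_iff] at hl hr
    exact absurd (hl.trans hr.symm) hlt.ne

lemma eq_inl_of_realF_inl_subset {n : ℕ} {e : Fin (2 ^ n)} {f : Face n}
    (h : realF n (.inl e) ⊆ realF n f) : f = .inl e := by
  obtain ⟨e', rfl, hl, hr⟩ := exists_eq_inl_of_realF_inl_subset h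
  have hl' : (e' : ℝ) ≤ e := (div_le_div_iff_of_pos_right (by positivity)).1 hl
  have hr' : (e : ℝ) + 1 ≤ e' + 1 := (div_le_div_iff_of_pos_right (by positivity)).1 hr
  exact congrArg _ (Fin.ext (by exact_mod_cast le_antisymm hl' (by linarith)))

lemma exists_eq_inl_half_of_realF_inl_succ_subset {n a : ℕ} (ha : a < 2 ^ (n + 1)) {f : Face n}
    (h : realF (n + 1) (.inl ⟨a, ha⟩) ⊆ realF n f) :
    ∃ ha' : a / 2 < 2 ^ n, f = .inl ⟨a / 2, ha'⟩ := by
  obtain ⟨e, rfl, hl, hr⟩ := exists_eq_inl_of_realF_inl_subset h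
  simp only [pow_succ] at hl hr
  field_simp at hl hr
  have : e.1 = a / 2 := by
    have hl' : 2 * e.1 ≤ a := by exact_mod_cast (by linarith : (2 * e.1 : ℝ) ≤ a)
    have hr' : a + 1 ≤ 2 * e.1 + 2 := by exact_mod_cast (by linarith : (a + 1 : ℝ) ≤ 2 * e.1 + 2)
    omega
  exact ⟨this ▸ e.2, congrArg _ (Fin.ext this)⟩

lemma realF_inl_succ_subset {n a : ℕ} (ha : a < 2 ^ (n + 1)) (ha' : a / 2 < 2 ^ n) :
    realF (n + 1) (.inl ⟨a, ha⟩) ⊆ realF n (.inl ⟨a / 2, ha'⟩) := by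
  intro y hy
  rw [mem_realF_inl] at hy ⊢
  have hl : (2 * (a / 2 : ℕ) : ℝ) ≤ a := by exact_mod_cast Nat.mul_div_le a 2
  have hr : (a + 1 : ℝ) ≤ 2 * (a / 2 : ℕ) + 2 := by
    exact_mod_cast (by omega : a + 1 ≤ 2 * (a / 2) + 2)
  simp only [pow_succ] at hy
  constructor <;> nlinarith

namespace CLim

lemma eq_of_succ_eq {τ τ' : CLim} {n : ℕ} (h : τ.1 (n + 1) = τ'.1 (n + 1)) :
    τ.1 n = τ'.1 n :=
  realF_injective n <|
    Subset.antisymm ((τ.2 n).2 _ (h ▸ (τ'.2 n).1)) ((τ'.2 n).2 _ (h ▸ (τ.2 n).1))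

lemma ext_of_forall_ge {τ τ' : CLim} (N : ℕ) (h : ∀ n, N ≤ n → τ.1 n = τ'.1 n) : τ = τ' := by
  have key : ∀ d n, N ≤ n + d → τ.1 n = τ'.1 n := by
    intro d
    induction d with
    | zero => exact h
    | succ d ih => exact fun n hn => eq_of_succ_eq (ih (n + 1) (by omega))
  exact Subtype.ext (funext fun n => key N n (by omega))

lemma mem_of_forall_ge {S : Set CLim} {τ : CLim} (N : ℕ)
    (hS : ∀ n, N ≤ n → S.InjOn (fun ρ : CLim => ρ.1 n))
    (hτ : ∀ n, N ≤ n → ∃ ρ ∈ S, τ.1 n = ρ.1 n) : τ ∈ S := by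
  obtain ⟨ρ, hρS, hρ⟩ := hτ N le_rfl
  suffices ∀ n, N ≤ n → τ.1 n = ρ.1 n from ext_of_forall_ge N this ▸ hρS
  intro n hn
  induction n, hn using Nat.le_induction with
  | base => exact hρ
  | succ n hn ih =>
    obtain ⟨ρ', hρ'S, hρ'⟩ := hτ (n + 1) (by omega)
    have : ρ' = ρ := hS n hn hρ'S hρS ((eq_of_succ_eq hρ').symm.trans ih)
    rwa [← this]

def ofEdges (a : ℕ → ℕ) (ha : ∀ n, a n < 2 ^ n) (hrec : ∀ n, a (n + 1) / 2 = a n) : CLim :=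
  ⟨fun n => .inl ⟨a n, ha n⟩, fun n => by
    refine ⟨by simpa only [hrec] using realF_inl_succ_subset (ha (n + 1)) (hrec n ▸ ha n),
      fun f hf => ?_⟩
    obtain ⟨-, rfl⟩ := exists_eq_inl_half_of_realF_inl_succ_subset _ hf
    simp only [hrec, subset_rfl]⟩

noncomputable def leftEdges (x : ℝ) (hx : x ≤ 1) : CLim :=
  ofEdges (fun n => ⌈x * 2 ^ n⌉₊ - 1)
    (fun n => by
      have : ⌈x * 2 ^ n⌉₊ ≤ 2 ^ n :=
        Nat.ceil_le.2 (by push_cast; exact mul_le_of_le_one_left (by positivity) hx)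
      have := Nat.one_le_two_pow (n := n)
      omega)
    (fun n => by
      rw [pow_succ, mul_comm _ (2 : ℝ), ← mul_assoc, mul_comm x, mul_assoc,
        Nat.ceil_two_mul_sub_one_div_two, mul_comm])

noncomputable def rightEdges (x : ℝ) (hx : x < 1) : CLim :=
  ofEdges (fun n => ⌊x * 2 ^ n⌋₊)
    (fun n => (Nat.floor_lt' (by positivity)).2
      (by push_cast; exact mul_lt_of_lt_one_left (by positivity) hx))
    (fun n => by
      rw [← Nat.floor_div_ofNat, pow_succ, ← mul_assoc, mul_div_cancel_right₀ _ two_ne_zero])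

lemma mem_realF_leftEdges {x : ℝ} (h0 : 0 < x) (hx : x ≤ 1) (n : ℕ) :
    x ∈ realF n ((leftEdges x hx).1 n) := by
  have hpos : 0 < x * 2 ^ n := by positivity
  have h1 : 1 ≤ ⌈x * 2 ^ n⌉₊ := Nat.one_le_iff_ne_zero.2 (Nat.ceil_pos.2 hpos).ne'
  refine mem_realF_inl.2 ⟨?_, ?_⟩
  · push_cast [h1]; linarith [Nat.ceil_lt_add_one hpos.le]
  · push_cast [h1]; linarith [Nat.le_ceil (x * 2 ^ n)]

lemma mem_realF_rightEdges {x : ℝ} (h0 : 0 ≤ x) (hx : x < 1) (n : ℕ) :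
    x ∈ realF n ((rightEdges x hx).1 n) :=
  mem_realF_inl.2 ⟨Nat.floor_le (by positivity), (Nat.lt_floor_add_one _).le⟩

end CLim

def IsCarrier (x : ℝ) (σ : CLim) : Prop :=
  ∀ n, x ∈ realF n (σ.1 n) ∧ ∀ f : Face n, x ∈ realF n f → realF n (σ.1 n) ⊆ realF n f

namespace IsCarrier

variable {x : ℝ} {σ : CLim}

lemma specLe_iff (hσ : IsCarrier x σ) {τ : CLim} : SpecLe τ σ ↔ ∀ n, x ∈ realF n (τ.1 n) :=
  ⟨fun h n => h n (hσ n).1, fun h n => (hσ n).2 _ (h n)⟩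

lemma eq_inr (hσ : IsCarrier x σ) {n : ℕ} {v : Fin (2 ^ n + 1)} (h : x ∈ realF n (.inr v)) :
    σ.1 n = .inr v :=
  realF_injective n <| Subset.antisymm ((hσ n).2 _ h)
    (singleton_subset_iff.2 (mem_singleton_iff.1 h ▸ (hσ n).1))

lemma downset_eq_singleton (hσ : IsCarrier x σ)
    (hv : ∀ n (v : Fin (2 ^ n + 1)), x ∉ realF n (.inr v)) : {τ | SpecLe τ σ} = {σ} := by
  ext τ
  refine ⟨fun hτ => Subtype.ext (funext fun n => ?_), fun h => h ▸ fun n => subset_rfl⟩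
  cases hs : σ.1 n with
  | inr v => exact absurd (hs ▸ (hσ n).1) (hv n v)
  | inl e => exact eq_inl_of_realF_inl_subset (hs ▸ hτ n)

variable {n m : ℕ}

lemma eq_or_eq_or_eq_of_mem (hσ : IsCarrier x σ) (hx : x ∈ Ioo 0 1) (hm : x * 2 ^ n = m)
    {f : Face n} (hf : x ∈ realF n f) :
    f = σ.1 n ∨ f = (CLim.leftEdges x hx.2.le).1 n ∨ f = (CLim.rightEdges x hx.2).1 n := by
  cases f with
  | inr v => exact .inl (hσ.eq_inr hf).symm
  | inl e =>
    rw [mem_realF_inl, hm] at hf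
    have hl : e.1 ≤ m := by exact_mod_cast hf.1
    have hr : m ≤ e.1 + 1 := by exact_mod_cast hf.2
    right
    rcases (by omega : e.1 = m - 1 ∨ e.1 = m) with h | h
    · exact .inl (congrArg _ (Fin.ext (by simp [hm, h])))
    · exact .inr (congrArg _ (Fin.ext (by simp [hm, h])))

lemma ne_and_ne_and_ne (hσ : IsCarrier x σ) (hx : x ∈ Ioo 0 1) (hm : x * 2 ^ n = m) :
    σ.1 n ≠ (CLim.leftEdges x hx.2.le).1 n ∧ σ.1 n ≠ (CLim.rightEdges x hx.2).1 n ∧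
      (CLim.leftEdges x hx.2.le).1 n ≠ (CLim.rightEdges x hx.2).1 n := by
  have hm0 : 0 < m := by
    have : (0 : ℝ) < m := hm ▸ mul_pos hx.1 (by positivity)
    exact_mod_cast this
  have hm1 : m < 2 ^ n + 1 := by
    have : (m : ℝ) < 2 ^ n := hm ▸ mul_lt_of_lt_one_left (by positivity) hx.2
    exact_mod_cast this.trans (lt_add_one _)
  have hσn : σ.1 n = .inr ⟨m, hm1⟩ := hσ.eq_inr (mem_realF_inr.2 hm)
  simp only [hσn, CLim.leftEdges, CLim.rightEdges, CLim.ofEdges, hm, Nat.floor_natCast,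
    Nat.ceil_natCast]
  refine ⟨Sum.inr_ne_inl, Sum.inr_ne_inl, fun h => ?_⟩
  have := congrArg Fin.val (Sum.inl_injective h)
  simp only at this
  omega

theorem downset_eq_of_dyadic (hσ : IsCarrier x σ) (hx : x ∈ Ioo 0 1) (N : ℕ)
    (hN : ∀ n, N ≤ n → ∃ m : ℕ, x * 2 ^ n = m) :
    {τ | SpecLe τ σ} = {σ, CLim.leftEdges x hx.2.le, CLim.rightEdges x hx.2} := by
  ext τ
  constructor
  · intro hτ
    refine CLim.mem_of_forall_ge N (fun n hn => ?_) (fun n hn => ?_)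
    · obtain ⟨m, hm⟩ := hN n hn
      obtain ⟨hσL, hσR, hLR⟩ := hσ.ne_and_ne_and_ne hx hm
      simp only [InjOn, mem_insert_iff, mem_singleton_iff]
      rintro a (rfl | rfl | rfl) b (rfl | rfl | rfl) h <;>
        first | rfl | exact absurd h ‹_› | exact absurd h.symm ‹_›
    · obtain ⟨m, hm⟩ := hN n hn
      rcases hσ.eq_or_eq_or_eq_of_mem hx hm (hσ.specLe_iff.1 hτ n) with h | h | h <;>
        exact ⟨_, by simp, h⟩
  · rintro (rfl | rfl | rfl)
    · exact fun n => subset_rfl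
    · exact hσ.specLe_iff.2 (CLim.mem_realF_leftEdges hx.1 hx.2.le)
    · exact hσ.specLe_iff.2 (CLim.mem_realF_rightEdges hx.1.le hx.2)

theorem ncard_downset_of_dyadic (hσ : IsCarrier x σ) (hx : x ∈ Ioo 0 1) (N : ℕ)
    (hN : ∀ n, N ≤ n → ∃ m : ℕ, x * 2 ^ n = m) : {τ | SpecLe τ σ}.ncard = 3 := by
  obtain ⟨m, hm⟩ := hN N le_rfl
  obtain ⟨hσL, hσR, hLR⟩ := hσ.ne_and_ne_and_ne hx hm
  rw [hσ.downset_eq_of_dyadic hx N hN, ncard_eq_three]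
  exact ⟨_, _, _, fun h => hσL (congrArg (·.1 N) h), fun h => hσR (congrArg (·.1 N) h),
    fun h => hLR (congrArg (·.1 N) h), rfl⟩

end IsCarrier

lemma notMem_realF_inr_of_not_dyadic {x : ℝ} (hx : x ∈ Ioo 0 1)
    (hnd : ¬ ∃ N k : ℕ, 0 < k ∧ k < 2 ^ N ∧ x = (k : ℝ) / 2 ^ N) (n : ℕ) (v : Fin (2 ^ n + 1)) :
    x ∉ realF n (.inr v) := by
  intro h
  have hxv : x = v / 2 ^ n := h
  have hv0 : (0 : ℝ) < v := by
    have := hx.1; rw [hxv] at this; exact pos_of_mul_pos_left this (by positivity)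
  have hv1 : (v : ℝ) < 2 ^ n := by
    have := hx.2; rwa [hxv, div_lt_one (by positivity)] at this
  exact hnd ⟨n, v, by exact_mod_cast hv0, by exact_mod_cast hv1, hxv⟩

lemma natCast_div_two_pow_mul_two_pow {N n : ℕ} (hn : N ≤ n) (k : ℕ) :
    (k : ℝ) / 2 ^ N * 2 ^ n = (k * 2 ^ (n - N) : ℕ) := by
  obtain ⟨d, rfl⟩ := Nat.exists_eq_add_of_le hn
  rw [Nat.add_sub_cancel_left, pow_add]
  push_cast
  field_simp

/-- For `x ∈ (0,1)` and `σ` the maximal point of `Ch^∞(I)` corresponding to `x` (i.e. `σₙ`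
is the minimal face containing `x` at each stage): if `x` is a dyadic rational `k/2ᴺ` with
`0 < k < 2ᴺ`, the down-set of `σ` in the specialization order has exactly 3 elements;
if `x` is not a dyadic rational, it is a singleton. -/
theorem stmt18 (x : ℝ) (hx : x ∈ Set.Ioo (0 : ℝ) 1) (σ : CLim)
    (hσ : ∀ n, x ∈ realF n (σ.1 n) ∧
      ∀ f : Face n, x ∈ realF n f → realF n (σ.1 n) ⊆ realF n f) :
    ((∃ N k : ℕ, 0 < k ∧ k < 2 ^ N ∧ x = (k : ℝ) / 2 ^ N) →
      {τ : CLim | SpecLe τ σ}.ncard = 3) ∧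
    ((¬ ∃ N k : ℕ, 0 < k ∧ k < 2 ^ N ∧ x = (k : ℝ) / 2 ^ N) →
      {τ : CLim | SpecLe τ σ}.ncard = 1) := by
  have hσ : IsCarrier x σ := hσ
  constructor
  · rintro ⟨N, k, -, -, rfl⟩
    exact hσ.ncard_downset_of_dyadic hx N fun n hn => ⟨_, natCast_div_two_pow_mul_two_pow hn k⟩
  · intro hnd
    rw [hσ.downset_eq_singleton (notMem_realF_inr_of_not_dyadic hx hnd), ncard_singleton]
end
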